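/- arXiv:2009.04044 — 4 statements merged into one kernel-verified Lean document; each statement's English description precedes it below -/
import Mathlib

section
/- Let A ⊂ Z^d (d ≥ 3) be finite and connected with Z^d \ A connected, and let U = ∪_{y∈A} {z ∈ R^d : |z − y|_∞ ≤ 1}. If y1, y2 lie on the internal boundary ∂A of A (vertices of A adjacent to the complement), then there exists a finite sequence z_1 = y_1, z_2, ..., z_m = y_2 of vertices in ∂A with |z_i − z_{i+1}|_∞ = 1 for all i; i.e., ∂A is connected in the graph on Z^d where vertices at l^∞ distance 1 are adjacent. -/
open scoped BigOperators ENNReal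
open MeasureTheory

namespace Paper

abbrev V (d : ℕ) := Fin d → ℤ

def stepVec (d : ℕ) (s : Fin d × Bool) : V d :=
  if s.2 then Pi.single s.1 1 else Pi.single s.1 (-1)

/-- closed l^∞ ball of real radius `R` around `x` in `ℤ^d`. -/
def ball (d : ℕ) (x : V d) (R : ℝ) : Set (V d) :=
  {z | ∀ i, |((z i - x i : ℤ) : ℝ)| ≤ R}

/-- l^∞ norm (as a natural number). -/
def linfN (d : ℕ) (v : V d) : ℕ := Finset.univ.sup fun i => (v i).natAbs

/-- nearest neighbour adjacency in `ℤ^d`. -/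
def nnAdj (d : ℕ) (x y : V d) : Prop := (∑ i, (x i - y i).natAbs) = 1

/-- *-adjacency: distinct points at l^∞ distance 1. -/
def starAdj (d : ℕ) (x y : V d) : Prop := x ≠ y ∧ ∀ i, (x i - y i).natAbs ≤ 1

/-- connectivity of a set under a given adjacency relation. -/
def connIn (d : ℕ) (S : Set (V d)) (adj : V d → V d → Prop) : Prop :=
  ∀ a ∈ S, ∀ b ∈ S, Relation.ReflTransGen (fun p q => adj p q ∧ p ∈ S ∧ q ∈ S) a b

/-- the internal (vertex) boundary of `A`. -/
def innerBd (d : ℕ) (A : Set (V d)) : Set (V d) :=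
  {x ∈ A | ∃ z, z ∉ A ∧ nnAdj d x z}

/-!
Call an oriented nearest-neighbour edge from `A` to `Aᶜ` a boundary edge, and let two boundary
edges be adjacent when their four endpoints lie in a common unit cube. Fix a boundary edge `e₀`
and let `φ` be the mod 2 indicator of the (unoriented) boundary edges reachable from `e₀`. On the
four edges of a unit square, `φ` either vanishes identically or agrees with the coboundary of the
indicator of `A`, so `φ` is a cocycle; as `ℤ^d` is simply connected, `φ = δf`. Since `φ` vanishes
on edges inside `A` and inside `Aᶜ`, connectivity makes `f` constant on `A` and on `Aᶜ`, so
`φ = 1` on every boundary edge: all boundary edges are reachable from `e₀`. The endpoints in `A`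
of adjacent boundary edges lie in a unit cube, hence are at l^∞ distance at most 1.
-/

open Relation

local notation "𝐞" i:max => (Pi.single i 1 : V _)

section Lattice

variable {d : ℕ}

lemma nnAdj_comm {x y : V d} : nnAdj d x y ↔ nnAdj d y x := by
  simp only [nnAdj, ← Int.natAbs_neg (x _ - y _), neg_sub]

lemma nnAdj_add_single (x : V d) (i : Fin d) : nnAdj d x (x + 𝐞 i) := by
  simp [nnAdj, Pi.single_apply, apply_ite Int.natAbs]

lemma nnAdj.exists_eq_add_single {x y : V d} (h : nnAdj d x y) :
    ∃ i, y = x + 𝐞 i ∨ x = y + 𝐞 i := by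
  obtain ⟨i, -, hi⟩ := Finset.exists_ne_zero_of_sum_ne_zero (h.symm ▸ one_ne_zero)
  rw [nnAdj, ← Finset.add_sum_erase _ _ (Finset.mem_univ i)] at h
  have hrest : ∀ k ≠ i, x k = y k := fun k hk => by
    have h0 : ∑ k ∈ Finset.univ.erase i, (x k - y k).natAbs = 0 := by omega
    have := Finset.sum_eq_zero_iff.mp h0 k (Finset.mem_erase.mpr ⟨hk, Finset.mem_univ k⟩)
    omega
  refine ⟨i, ?_⟩
  rcases (by omega : x i - y i = -1 ∨ x i - y i = 1) with hxy | hxy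
  · left
    funext k
    by_cases hk : k = i
    · subst hk; simp; omega
    · simp [hk, hrest k hk]
  · right
    funext k
    by_cases hk : k = i
    · subst hk; simp; omega
    · simp [hk, hrest k hk]

end Lattice

section Potential

variable {G : Type*} [AddCommGroup G]

noncomputable def intervalSum (g : ℤ → G) (n : ℤ) : G :=
  ∑ k ∈ Finset.Ico 0 n, g k - ∑ k ∈ Finset.Ico n 0, g k

lemma intervalSum_zero (g : ℤ → G) : intervalSum g 0 = 0 := by
  simp [intervalSum]

lemma intervalSum_add_one (g : ℤ → G) (n : ℤ) :
    intervalSum g (n + 1) = intervalSum g n + g n := by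
  rcases le_or_gt 0 n with hn | hn
  · rw [intervalSum, intervalSum, ← Finset.insert_Ico_right_eq_Ico_add_one hn,
      Finset.sum_insert (by simp), Finset.Ico_eq_empty_of_le hn,
      Finset.Ico_eq_empty_of_le (by omega : (0 : ℤ) ≤ n + 1)]
    simp only [Finset.sum_empty]
    abel
  · rw [intervalSum, intervalSum, ← Finset.insert_Ico_add_one_left_eq_Ico hn,
      Finset.sum_insert (by simp), Finset.Ico_eq_empty_of_le hn.le,
      Finset.Ico_eq_empty_of_le (by omega : n + 1 ≤ 0)]
    simp only [Finset.sum_empty]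
    abel

variable {d : ℕ} (φ : V d → V d → G)

noncomputable def lineSum (b : V d) (i : Fin d) : ℤ → G :=
  intervalSum fun k => φ (b + k • 𝐞 i) (b + (k + 1) • 𝐞 i)

def IsCocycle : Prop :=
  ∀ p i j, φ p (p + 𝐞 i) + φ (p + 𝐞 i) (p + 𝐞 i + 𝐞 j) =
    φ p (p + 𝐞 j) + φ (p + 𝐞 j) (p + 𝐞 i + 𝐞 j)

lemma lineSum_zero (b : V d) (i : Fin d) : lineSum φ b i 0 = 0 :=
  intervalSum_zero _

lemma lineSum_add_one (b : V d) (i : Fin d) (n : ℤ) :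
    lineSum φ b i (n + 1) = lineSum φ b i n + φ (b + n • 𝐞 i) (b + n • 𝐞 i + 𝐞 i) := by
  rw [lineSum, intervalSum_add_one, add_smul, one_smul, add_assoc b]

variable {φ}

lemma IsCocycle.lineSum_add_single_sub (hφ : IsCocycle φ) (b : V d) (i j : Fin d) (n : ℤ) :
    lineSum φ (b + 𝐞 j) i n - lineSum φ b i n =
      φ (b + n • 𝐞 i) (b + n • 𝐞 i + 𝐞 j) - φ b (b + 𝐞 j) := by
  have hper : Function.Periodic (fun n : ℤ => lineSum φ (b + 𝐞 j) i n - lineSum φ b i n -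
      φ (b + n • 𝐞 i) (b + n • 𝐞 i + 𝐞 j)) 1 := by
    intro n
    have hsq := hφ (b + n • 𝐞 i) i j
    simp only [lineSum_add_one, add_smul, one_smul]
    linear_combination (norm := abel_nf) -hsq
  have := hper.int_mul_eq n
  simp only [mul_one, Int.cast_id, zero_smul, add_zero, lineSum_zero] at this
  linear_combination (norm := abel_nf) this

def truncate (m : ℕ) (x : V d) : V d := fun k => if (k : ℕ) < m then x k else 0

lemma truncate_add_single (m : ℕ) (x : V d) (j : Fin d) :
    truncate m (x + 𝐞 j) = truncate m x + if (j : ℕ) < m then 𝐞 j else 0 := by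
  funext k
  by_cases hk : k = j
  · subst hk; split_ifs <;> simp [truncate, *]
  · split_ifs <;> simp [truncate, hk]

lemma truncate_add_smul_single (i : Fin d) (x : V d) :
    truncate i x + x i • 𝐞 i = truncate (i + 1) x := by
  funext k
  by_cases hk : k = i
  · subst hk; simp [truncate]
  · have : (k : ℕ) ≠ i := Fin.val_ne_of_ne hk
    simp only [truncate, Pi.add_apply, Pi.smul_apply, Pi.single_apply, hk, if_false, smul_zero,
      add_zero]
    split_ifs <;> omega

lemma truncate_self (x : V d) : truncate d x = x :=
  funext fun k => if_pos k.isLt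

variable (φ : V d → V d → G)

/-- The sum of `φ` along the staircase path from `0` to `x` that moves the coordinates one after
the other, in increasing order. -/
noncomputable def potential (x : V d) : G :=
  ∑ i : Fin d, lineSum φ (truncate i x) i (x i)

def truncatedIncrement (x : V d) (j : Fin d) (m : ℕ) : G :=
  if (j : ℕ) < m then φ (truncate m x) (truncate m x + 𝐞 j) else 0

variable {φ}

lemma IsCocycle.lineSum_truncate_add_single_sub (hφ : IsCocycle φ) (x : V d) (i j : Fin d) :
    lineSum φ (truncate i (x + 𝐞 j)) i ((x + 𝐞 j) i) - lineSum φ (truncate i x) i (x i) =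
      truncatedIncrement φ x j (i + 1) - truncatedIncrement φ x j i := by
  rcases lt_trichotomy (i : ℕ) j with hij | hij | hij
  · have hne : i ≠ j := Fin.ne_of_val_ne hij.ne
    simp only [truncate_add_single, truncatedIncrement, if_neg (by omega : ¬(j : ℕ) < i),
      if_neg (by omega : ¬(j : ℕ) < i + 1), Pi.add_apply, Pi.single_apply, hne, if_false,
      add_zero, sub_self]
  · obtain rfl := Fin.ext hij
    simp only [truncate_add_single, truncatedIncrement, lt_irrefl, Nat.lt_succ_self, if_false,
      if_true, add_zero, sub_zero, Pi.add_apply, Pi.single_eq_same, lineSum_add_one,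
      add_sub_cancel_left, truncate_add_smul_single]
  · have hne : i ≠ j := Fin.ne_of_val_ne hij.ne'
    simp only [truncate_add_single, truncatedIncrement, if_pos hij,
      if_pos (by omega : (j : ℕ) < i + 1), Pi.add_apply, Pi.single_apply, hne, if_false,
      add_zero, hφ.lineSum_add_single_sub, truncate_add_smul_single]

theorem IsCocycle.potential_add_single_sub (hφ : IsCocycle φ) (x : V d) (j : Fin d) :
    potential φ (x + 𝐞 j) - potential φ x = φ x (x + 𝐞 j) := by
  rw [potential, potential, ← Finset.sum_sub_distrib]
  simp only [hφ.lineSum_truncate_add_single_sub]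
  rw [Fin.sum_univ_eq_sum_range
      (fun m => truncatedIncrement φ x j (m + 1) - truncatedIncrement φ x j m),
    Finset.sum_range_sub]
  simp [truncatedIncrement, j.isLt, truncate_self]

end Potential

section ModTwo

variable {d : ℕ} {φ : V d → V d → ZMod 2}

lemma IsCocycle.potential_add_potential (hφ : IsCocycle φ) (hsymm : ∀ x y, φ x y = φ y x)
    {x y : V d} (h : nnAdj d x y) : potential φ x + potential φ y = φ x y := by
  obtain ⟨i, rfl | rfl⟩ := h.exists_eq_add_single
  · rw [← hφ.potential_add_single_sub, CharTwo.sub_eq_add, add_comm]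
  · rw [hsymm, ← hφ.potential_add_single_sub, CharTwo.sub_eq_add]

lemma IsCocycle.potential_eq_of_reflTransGen (hφ : IsCocycle φ)
    (hsymm : ∀ x y, φ x y = φ y x) {S : Set (V d)} (hS : ∀ x ∈ S, ∀ y ∈ S, φ x y = 0) {a b : V d}
    (h : ReflTransGen (fun p q => nnAdj d p q ∧ p ∈ S ∧ q ∈ S) a b) :
    potential φ a = potential φ b := by
  induction h with
  | refl => rfl
  | tail _ hpq ih =>
    obtain ⟨hadj, hp, hq⟩ := hpq
    rw [ih, ← CharTwo.add_eq_zero, hφ.potential_add_potential hsymm hadj, hS _ hp _ hq]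

end ModTwo

section BoundaryEdges

variable {d : ℕ} (A : Set (V d))

def boundaryEdges : Set (V d × V d) := {e | e.1 ∈ A ∧ e.2 ∉ A ∧ nnAdj d e.1 e.2}

def CubeAdj (e f : V d × V d) : Prop :=
  e ∈ boundaryEdges A ∧ f ∈ boundaryEdges A ∧
    ∃ p : V d, {e.1, e.2, f.1, f.2} ⊆ Set.Icc p (p + 1)

open Classical in
noncomputable def reachIndicator (e₀ : V d × V d) (x y : V d) : ZMod 2 :=
  if ReflTransGen (CubeAdj A) e₀ (x, y) ∨ ReflTransGen (CubeAdj A) e₀ (y, x) then 1 else 0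

variable {A}

lemma natAbs_sub_le_one_of_mem_Icc {p x y : V d} (hx : x ∈ Set.Icc p (p + 1))
    (hy : y ∈ Set.Icc p (p + 1)) (k : Fin d) : (x k - y k).natAbs ≤ 1 := by
  have := hx.1 k; have := hx.2 k; have := hy.1 k; have := hy.2 k
  simp only [Pi.add_apply, Pi.one_apply] at *
  omega

lemma reflTransGen_starAdj_of_reflTransGen_cubeAdj {e f : V d × V d}
    (h : ReflTransGen (CubeAdj A) e f) :
    ReflTransGen (fun p q => starAdj d p q ∧ p ∈ innerBd d A ∧ q ∈ innerBd d A) e.1 f.1 := by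
  refine h.lift' Prod.fst fun e f ⟨he, hf, p, hsub⟩ => ?_
  by_cases hef : e.1 = f.1
  · rw [Function.onFun, hef]
  · refine .single ⟨⟨hef, natAbs_sub_le_one_of_mem_Icc (hsub (by simp)) (hsub (by simp))⟩,
      ⟨he.1, e.2, he.2⟩, ⟨hf.1, f.2, hf.2⟩⟩

variable {e₀ : V d × V d}

lemma mem_boundaryEdges_of_reflTransGen (he₀ : e₀ ∈ boundaryEdges A) {e : V d × V d}
    (h : ReflTransGen (CubeAdj A) e₀ e) : e ∈ boundaryEdges A := by
  rcases h.cases_tail with rfl | ⟨c, -, hc⟩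
  exacts [he₀, hc.2.1]

lemma reachIndicator_comm (x y : V d) : reachIndicator A e₀ x y = reachIndicator A e₀ y x := by
  classical exact if_congr or_comm rfl rfl

lemma reachIndicator_eq_zero_of_iff (he₀ : e₀ ∈ boundaryEdges A) {x y : V d}
    (hxy : x ∈ A ↔ y ∈ A) : reachIndicator A e₀ x y = 0 := by
  refine if_neg ?_
  rintro (h | h)
  · have ⟨hx, hy, _⟩ := mem_boundaryEdges_of_reflTransGen he₀ h
    exact hy (hxy.mp hx)
  · have ⟨hy, hx, _⟩ := mem_boundaryEdges_of_reflTransGen he₀ h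
    exact hx (hxy.mpr hy)

lemma reflTransGen_of_reachIndicator_eq_one (he₀ : e₀ ∈ boundaryEdges A) {y z : V d}
    (hz : z ∉ A) (h : reachIndicator A e₀ y z = 1) : ReflTransGen (CubeAdj A) e₀ (y, z) := by
  by_contra hyz
  refine absurd h ?_
  rw [reachIndicator, if_neg]
  · decide
  rintro (h | h)
  exacts [hyz h, hz (mem_boundaryEdges_of_reflTransGen he₀ h).1]

open Classical in
lemma reachIndicator_eq_of_mem_Icc (he₀ : e₀ ∈ boundaryEdges A) {p u v : V d}
    (hu : u ∈ Set.Icc p (p + 1)) (hv : v ∈ Set.Icc p (p + 1)) (huv : nnAdj d u v) :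
    reachIndicator A e₀ u v =
      if ∃ e, ReflTransGen (CubeAdj A) e₀ e ∧ {e.1, e.2} ⊆ Set.Icc p (p + 1)
      then A.indicator 1 u + A.indicator 1 v else 0 := by
  have reach_iff : ∀ {x y : V d}, x ∈ Set.Icc p (p + 1) → y ∈ Set.Icc p (p + 1) →
      (x, y) ∈ boundaryEdges A → (ReflTransGen (CubeAdj A) e₀ (x, y) ↔
        ∃ e, ReflTransGen (CubeAdj A) e₀ e ∧ {e.1, e.2} ⊆ Set.Icc p (p + 1)) :=
    fun hx hy hxy => ⟨fun h => ⟨_, h, by simp [Set.insert_subset_iff, hx, hy]⟩,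
      fun ⟨e, he, hsub⟩ => he.tail ⟨mem_boundaryEdges_of_reflTransGen he₀ he, hxy, p,
        by simp_all [Set.insert_subset_iff]⟩⟩
  by_cases hu' : u ∈ A <;> by_cases hv' : v ∈ A
  · simp only [reachIndicator_eq_zero_of_iff he₀ (iff_of_true hu' hv'),
      Set.indicator_of_mem hu', Set.indicator_of_mem hv', Pi.one_apply,
      CharTwo.add_self_eq_zero, ite_self]
  · have hvu : ¬ReflTransGen (CubeAdj A) e₀ (v, u) := fun h =>
      hv' (mem_boundaryEdges_of_reflTransGen he₀ h).1
    simp only [reachIndicator, hvu, or_false, ← reach_iff hu hv ⟨hu', hv', huv⟩,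
      Set.indicator_of_mem hu', Set.indicator_of_notMem hv', Pi.one_apply, add_zero]
  · have huv' : ¬ReflTransGen (CubeAdj A) e₀ (u, v) := fun h =>
      hu' (mem_boundaryEdges_of_reflTransGen he₀ h).1
    simp only [reachIndicator, huv', false_or,
      ← reach_iff hv hu ⟨hv', hu', nnAdj_comm.mp huv⟩, Set.indicator_of_mem hv',
      Set.indicator_of_notMem hu', Pi.one_apply, zero_add]
  · rw [reachIndicator_eq_zero_of_iff he₀ (iff_of_false hu' hv')]
    simp [hu', hv']

lemma isCocycle_reachIndicator (he₀ : e₀ ∈ boundaryEdges A) :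
    IsCocycle (reachIndicator A e₀) := by
  intro p i j
  rcases eq_or_ne i j with rfl | hij
  · rfl
  have hcube : ∀ v ∈ ({p, p + 𝐞 i, p + 𝐞 j, p + 𝐞 i + 𝐞 j} : Set (V d)),
      v ∈ Set.Icc p (p + 1) := by
    simp only [Set.mem_insert_iff, Set.mem_singleton_iff]
    rintro v (rfl | rfl | rfl | rfl) <;> refine ⟨fun k => ?_, fun k => ?_⟩ <;>
      simp only [Pi.add_apply, Pi.one_apply, Pi.single_apply] <;> (try split_ifs) <;> omega
  have hadj : nnAdj d (p + 𝐞 j) (p + 𝐞 i + 𝐞 j) :=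
    add_right_comm p (𝐞 i) (𝐞 j) ▸ nnAdj_add_single _ i
  rw [reachIndicator_eq_of_mem_Icc he₀ (hcube _ (by simp)) (hcube _ (by simp))
      (nnAdj_add_single p i),
    reachIndicator_eq_of_mem_Icc he₀ (hcube _ (by simp)) (hcube _ (by simp))
      (nnAdj_add_single _ j),
    reachIndicator_eq_of_mem_Icc he₀ (hcube _ (by simp)) (hcube _ (by simp))
      (nnAdj_add_single p j),
    reachIndicator_eq_of_mem_Icc he₀ (hcube _ (by simp)) (hcube _ (by simp)) hadj]
  split_ifs
  · -- the corners `p + 𝐞 i` and `p + 𝐞 j` each occur twice, and `2 = 0` in `ZMod 2`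
    ring_nf
    reduce_mod_char
  · rfl

end BoundaryEdges

theorem statement8_general (d : ℕ) (A : Set (V d))
    (hconnA : connIn d A (nnAdj d)) (hconnC : connIn d Aᶜ (nnAdj d)) :
    ∀ y₁ ∈ innerBd d A, ∀ y₂ ∈ innerBd d A,
      Relation.ReflTransGen
        (fun p q => starAdj d p q ∧ p ∈ innerBd d A ∧ q ∈ innerBd d A) y₁ y₂ := by
  rintro y₁ ⟨hy₁, z₁, hz₁, h₁⟩ y₂ ⟨hy₂, z₂, hz₂, h₂⟩
  have he₀ : (y₁, z₁) ∈ boundaryEdges A := ⟨hy₁, hz₁, h₁⟩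
  set φ := reachIndicator A (y₁, z₁)
  have hφ : IsCocycle φ := isCocycle_reachIndicator he₀
  have hsymm : ∀ x y, φ x y = φ y x := reachIndicator_comm
  have hy : potential φ y₁ = potential φ y₂ :=
    hφ.potential_eq_of_reflTransGen hsymm
      (fun x hx y hy => reachIndicator_eq_zero_of_iff he₀ (iff_of_true hx hy))
      (hconnA y₁ hy₁ y₂ hy₂)
  have hz : potential φ z₁ = potential φ z₂ :=
    hφ.potential_eq_of_reflTransGen hsymm
      (fun x hx y hy => reachIndicator_eq_zero_of_iff he₀ (iff_of_false hx hy))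
      (hconnC z₁ hz₁ z₂ hz₂)
  have hreach : φ y₂ z₂ = 1 := by
    rw [← hφ.potential_add_potential hsymm h₂, ← hy, ← hz, hφ.potential_add_potential hsymm h₁]
    exact if_pos (.inl .refl)
  exact reflTransGen_starAdj_of_reflTransGen_cubeAdj
    (reflTransGen_of_reachIndicator_eq_one he₀ hz₂ hreach)

/-- if `A ⊂ ℤ^d` (`d ≥ 3`) is finite and connected with connected
complement, then the internal boundary `∂A` is connected in the *-graph: any two
boundary points are joined by a sequence of boundary points with consecutive l^∞
distance 1. -/
theorem statement8 (d : ℕ) (hd : 3 ≤ d) (A : Set (V d)) (hfin : A.Finite)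
    (hconnA : connIn d A (nnAdj d)) (hconnC : connIn d Aᶜ (nnAdj d)) :
    ∀ y₁ ∈ innerBd d A, ∀ y₂ ∈ innerBd d A,
      Relation.ReflTransGen
        (fun p q => starAdj d p q ∧ p ∈ innerBd d A ∧ q ∈ innerBd d A) y₁ y₂ :=
  statement8_general d A hconnA hconnC

end Paper
end

section
/- Let d ≥ 3 and 0 < a < 0.3, n = ⌊bT^{1/2}⌋ for a fixed constant b > 0. For the geometrically killed capacity cap^{(T)}(K) = Σ_{x∈K} P_x^{(T)}(H̄_K = ∞), where P_x^{(T)} is the law of a geometrically killed simple random walk with killing rate 1/(T+1), there exists c(u,d) > 0 such that cap^{(T)}(B(0, n^a)) ≤ c·n^{a(d−2)}. -/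
open scoped BigOperators ENNReal
open MeasureTheory

namespace Paper

/-- positions of the walk from `x` with `n` prescribed steps `σ`. -/
def pathOf (d n : ℕ) (x : V d) (σ : Fin n → Fin d × Bool) : ℕ → V d :=
  fun k => x + ∑ i : Fin n, if (i : ℕ) < k then stepVec d (σ i) else 0

/-- a finite path: starting point together with a finite sequence of unit steps. -/
structure PathData (d : ℕ) where
  start : V d
  len : ℕ
  steps : Fin len → Fin d × Bool

/-- position of the path `η` at time `k` (frozen after time `η.len`). -/
def pos (d : ℕ) (η : PathData d) (k : ℕ) : V d :=
  pathOf d η.len η.start η.steps k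

/-- probability that the geometrically killed walk started at `η.start`
(killing rate `1/(T+1)`) realizes exactly the path `η`. -/
noncomputable def kWeight (d : ℕ) (T : ℝ) (η : PathData d) : ℝ :=
  (T / (T + 1)) ^ η.len * (1 / (T + 1)) * (1 / (2 * (d : ℝ))) ^ η.len

/-- `P` is (the law of) the finitary random interlacements point process `FI^{u,T}`:
for each site `x` a `Poisson(2du/(T+1))` number of independent geometrically killed
random walks start at `x`; equivalently the multiplicity of each finite path `η` is
Poisson with intensity `(2du/(T+1)) ⋅ kWeight η`, independently over paths. -/
def IsFRI (d : ℕ) (u T : ℝ) (P : Measure ((PathData d) → ℕ)) : Prop :=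
  IsProbabilityMeasure P ∧
  (∀ η : PathData d,
      P.map (fun conf => conf η) =
        (ProbabilityTheory.poissonPMF
          (Real.toNNReal (2 * d * u / (T + 1) * kWeight d T η))).toMeasure) ∧
  ProbabilityTheory.iIndepFun
    (fun η conf => conf η) P

/-- an edge `{v,w}` is open in the configuration `conf` if some present trajectory
traverses it. -/
def edgeOpen (d : ℕ) (conf : PathData d → ℕ) (v w : V d) : Prop :=
  ∃ η : PathData d, conf η ≠ 0 ∧ ∃ k : ℕ, k + 1 ≤ η.len ∧
    ((pos d η k = v ∧ pos d η (k + 1) = w) ∨ (pos d η k = w ∧ pos d η (k + 1) = v))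

open Classical in
/-- escape probability `P_x^{(T)}(H̄_A = ∞)` for the geometrically killed walk:
the total weight of killed paths started at `x` which never return to `A`. -/
noncomputable def escProbT (d : ℕ) (T : ℝ) (A : Set (V d)) (x : V d) : ℝ :=
  ∑' η : PathData d,
    if η.start = x ∧ ∀ k, 1 ≤ k → k ≤ η.len → pos d η k ∉ A then kWeight d T η else 0

/-- killed capacity `cap^{(T)}(A) = Σ_{x∈A} P_x^{(T)}(H̄_A = ∞)`. -/
noncomputable def capT (d : ℕ) (T : ℝ) (A : Set (V d)) : ℝ :=
  ∑' x : A, escProbT d T A x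

/-!
Last-exit decomposition: for the killed walk from `y`, the events "alive and in `A` at time `k`,
never in `A` afterwards" are disjoint, so by the Markov property
`∑_{k ≤ m} ∑_{x ∈ A} P_y(X_k = x, alive at k) · P_x(H̄_A = ∞) ≤ 1`.
Summing over `y ∈ A` and reversing the walk gives `∑_{x ∈ A} P_x(H̄_A = ∞) · G_m(x, A) ≤ |A|`,
where `G_m(x, A)` is the expected number of visits to `A` up to time `m` of the killed walk
from `x`.

For `A = B(0, r)` and `m ≍ r² ≤ T / 2`, the walk survives `m` steps with probability at least `1/2`
(Bernoulli's inequality), and Chebyshev's inequality together with a reflection argument keeps it in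
the ball at each time `k ≤ m` with probability at least `2^{-(d+1)}`. Hence `G_m ≳ r²` and
`cap^{(T)}(B(r)) ≲ |B(r)| / r² ≍ r^{d-2}`; for `r = n^a ≤ n ≤ b √T` the condition `r² ≲ T` holds.
-/

section

open Finset

variable {d : ℕ} {T : ℝ}

def disp {k : ℕ} (σ : Fin k → Fin d × Bool) : V d := ∑ j, stepVec d (σ j)

lemma stepVec_apply (s : Fin d × Bool) (i : Fin d) :
    stepVec d s i = if s.1 = i then (if s.2 then 1 else -1) else 0 := by
  rcases s with ⟨j, _ | _⟩ <;> simp [stepVec, Pi.single_apply, eq_comm]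

lemma pathOf_zero (n : ℕ) (x : V d) (τ : Fin n → Fin d × Bool) : pathOf d n x τ 0 = x := by
  simp [pathOf]

lemma pathOf_append (k n : ℕ) (y : V d) (σ : Fin k → Fin d × Bool)
    (τ : Fin n → Fin d × Bool) (j : ℕ) :
    pathOf d (k + n) y (Fin.append σ τ) (k + j) = pathOf d n (y + disp σ) τ j := by
  simp only [pathOf, disp, Fin.sum_univ_add, Fin.append_left, Fin.append_right, Fin.val_castAdd,
    Fin.val_natAdd, add_lt_add_iff_left]
  rw [sum_congr rfl fun (i : Fin k) _ => if_pos (by omega : (i : ℕ) < k + j)]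
  abel

lemma sum_stepVec_apply (i : Fin d) : ∑ e : Fin d × Bool, stepVec d e i = 0 := by
  simp [Fintype.sum_prod_type, stepVec_apply]

lemma sum_stepVec_apply_sq (i : Fin d) : ∑ e : Fin d × Bool, stepVec d e i ^ 2 = 2 := by
  rw [Fintype.sum_prod_type]
  simp [stepVec_apply, apply_ite (· ^ 2)]

lemma disp_cons {k : ℕ} (e : Fin d × Bool) (σ : Fin k → Fin d × Bool) :
    disp (Fin.cons e σ : Fin (k + 1) → Fin d × Bool) = stepVec d e + disp σ := by
  simp [disp, Fin.sum_univ_succ]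

lemma sum_disp_apply_sq (i : Fin d) (k : ℕ) :
    (d : ℤ) * ∑ σ : Fin k → Fin d × Bool, disp σ i ^ 2 = k * (2 * d) ^ k := by
  induction k with
  | zero => simp [disp]
  | succ k ih =>
    have hcons : ∑ τ : Fin (k + 1) → Fin d × Bool, disp τ i ^ 2
        = ∑ e : Fin d × Bool, ∑ σ : Fin k → Fin d × Bool, (stepVec d e i + disp σ i) ^ 2 := by
      rw [← (Fin.consEquiv fun _ => Fin d × Bool).sum_comp, Fintype.sum_prod_type]
      simp [Fin.consEquiv, disp_cons]
    have hexpand : ∑ e : Fin d × Bool, ∑ σ : Fin k → Fin d × Bool, (stepVec d e i + disp σ i) ^ 2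
        = 2 * (2 * d) ^ k + 2 * d * ∑ σ : Fin k → Fin d × Bool, disp σ i ^ 2 := by
      simp only [add_sq, sum_add_distrib, ← mul_sum, ← sum_mul, sum_const, ← smul_sum,
        sum_stepVec_apply, sum_stepVec_apply_sq]
      simp
      ring
    rw [hcons, hexpand]
    push_cast
    linear_combination 2 * (d : ℤ) * ih

def flipSigns (F : Fin d → Bool) {k : ℕ} (σ : Fin k → Fin d × Bool) : Fin k → Fin d × Bool :=
  fun j => ((σ j).1, xor (F (σ j).1) (σ j).2)

lemma flipSigns_flipSigns (F : Fin d → Bool) {k : ℕ} (σ : Fin k → Fin d × Bool) :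
    flipSigns F (flipSigns F σ) = σ := by
  funext j
  simp [flipSigns]

lemma flipSigns_injective (F : Fin d → Bool) (k : ℕ) :
    Function.Injective (flipSigns F (k := k)) :=
  Function.LeftInverse.injective (flipSigns_flipSigns F)

lemma disp_flipSigns_apply (F : Fin d → Bool) {k : ℕ} (σ : Fin k → Fin d × Bool) (i : Fin d) :
    disp (flipSigns F σ) i = (if F i then -1 else 1) * disp σ i := by
  simp only [disp, flipSigns, Finset.sum_apply, mul_sum]
  refine sum_congr rfl fun j _ => ?_
  rcases σ j with ⟨m, b⟩
  by_cases hmi : m = i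
  · subst hmi
    cases F m <;> cases b <;> simp [stepVec_apply]
  · simp [stepVec_apply, hmi]

lemma mem_ball_zero {r : ℝ} {z : V d} : z ∈ ball d 0 r ↔ ∀ i, |(z i : ℝ)| ≤ r := by
  simp [ball]

lemma pow_le_two_pow_mul_card_disp_nonneg (k : ℕ) :
    (2 * d) ^ k ≤ 2 ^ d * #{σ : Fin k → Fin d × Bool | ∀ i, 0 ≤ disp σ i} := by
  let sign (σ : Fin k → Fin d × Bool) : Fin d → Bool := fun i => decide (disp σ i < 0)
  -- reflecting the negative coordinates, and remembering which ones, is injective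
  have hinj := card_le_card_of_injOn (fun σ => (flipSigns (sign σ) σ, sign σ))
    (s := univ) (t := ({σ : Fin k → Fin d × Bool | ∀ i, 0 ≤ disp σ i} : Finset _) ×ˢ
      (univ : Finset (Fin d → Bool)))
    (fun σ _ => by
      simp only [coe_product, coe_filter, Set.mem_prod, Set.mem_ofPred_eq, mem_univ, true_and,
        coe_univ, Set.mem_univ, and_true]
      intro i
      rw [disp_flipSigns_apply]
      by_cases h : disp σ i < 0 <;> simp [sign, h] <;> omega)
    (fun σ _ σ' _ h => by
      simp only [Prod.mk.injEq] at h
      rw [h.2] at h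
      exact flipSigns_injective _ _ h.1)
  simpa [card_product, mul_comm] using hinj

lemma card_abs_disp_gt_mul_sq_le (i : Fin d) (k : ℕ) {r : ℝ} (hr : 0 ≤ r) :
    (d : ℝ) * #{σ : Fin k → Fin d × Bool | r < |(disp σ i : ℝ)|} * r ^ 2 ≤ k * (2 * d) ^ k := by
  have hmarkov : (#{σ : Fin k → Fin d × Bool | r < |(disp σ i : ℝ)|} : ℝ) * r ^ 2
      ≤ ∑ σ : Fin k → Fin d × Bool, (disp σ i : ℝ) ^ 2 := by
    rw [← nsmul_eq_mul]
    refine (card_nsmul_le_sum _ _ _ fun σ hσ => ?_).trans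
      (sum_le_sum_of_subset_of_nonneg (filter_subset _ _) fun σ _ _ => sq_nonneg _)
    rw [mem_filter] at hσ
    nlinarith [hσ.2, sq_abs (disp σ i : ℝ)]
  have hsecond : (d : ℝ) * ∑ σ : Fin k → Fin d × Bool, (disp σ i : ℝ) ^ 2 = k * (2 * d) ^ k := by
    exact_mod_cast sum_disp_apply_sq i k
  rw [mul_assoc, ← hsecond]
  exact mul_le_mul_of_nonneg_left hmarkov d.cast_nonneg

lemma two_pow_mul_sum_card_abs_disp_gt_le (hd : 0 < d) {r : ℝ} (hr : 0 < r) {k : ℕ}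
    (hk : 2 ^ (d + 1) * k ≤ r ^ 2) :
    2 ^ (d + 1) * ∑ i, (#{σ : Fin k → Fin d × Bool | r < |(disp σ i : ℝ)|} : ℝ) ≤ (2 * d) ^ k := by
  set far := fun i : Fin d => ({σ : Fin k → Fin d × Bool | r < |(disp σ i : ℝ)|} : Finset _)
  have hchebyshev : r ^ 2 * ∑ i, (#(far i) : ℝ) ≤ k * (2 * d) ^ k := by
    have hd' : (0 : ℝ) < d := by exact_mod_cast hd
    have hsum := sum_le_sum fun (i : Fin d) (_ : i ∈ univ) => card_abs_disp_gt_mul_sq_le i k hr.le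
    rw [sum_const, card_univ, Fintype.card_fin, nsmul_eq_mul, ← sum_mul, ← mul_sum] at hsum
    refine le_of_mul_le_mul_left ?_ hd'
    linarith
  refine le_of_mul_le_mul_left ?_ (by positivity : (0 : ℝ) < r ^ 2)
  calc r ^ 2 * (2 ^ (d + 1) * ∑ i, (#(far i) : ℝ))
      _ = 2 ^ (d + 1) * (r ^ 2 * ∑ i, (#(far i) : ℝ)) := mul_left_comm _ _ _
      _ ≤ 2 ^ (d + 1) * (k * (2 * d) ^ k) := mul_le_mul_of_nonneg_left hchebyshev (by positivity)
      _ = 2 ^ (d + 1) * k * (2 * d) ^ k := (mul_assoc _ _ _).symm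
      _ ≤ r ^ 2 * (2 * d) ^ k := mul_le_mul_of_nonneg_right hk (by positivity)

lemma pow_le_card_disp_mem_box (hd : 0 < d) {r : ℝ} (hr : 0 < r) {k : ℕ}
    (hk : 2 ^ (d + 1) * k ≤ r ^ 2) :
    (2 * d : ℝ) ^ k ≤
      2 ^ (d + 1) * #{σ : Fin k → Fin d × Bool | ∀ i, 0 ≤ disp σ i ∧ (disp σ i : ℝ) ≤ r} := by
  set box := ({σ : Fin k → Fin d × Bool | ∀ i, 0 ≤ disp σ i ∧ (disp σ i : ℝ) ≤ r} : Finset _)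
  set far := fun i : Fin d => ({σ : Fin k → Fin d × Bool | r < |(disp σ i : ℝ)|} : Finset _)
  have horthant : ({σ : Fin k → Fin d × Bool | ∀ i, 0 ≤ disp σ i} : Finset _) ⊆
      box ∪ univ.biUnion far := by
    intro σ hσ
    simp only [mem_filter, mem_univ, true_and] at hσ
    by_cases hfar : ∃ i, r < |(disp σ i : ℝ)|
    · obtain ⟨i, hi⟩ := hfar
      exact mem_union_right _ (mem_biUnion.2 ⟨i, mem_univ _, by simpa [far] using hi⟩)
    · push Not at hfar
      exact mem_union_left _ (mem_filter.2
        ⟨mem_univ _, fun i => ⟨hσ i, (le_abs_self _).trans (hfar i)⟩⟩)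
  have hcard : (#{σ : Fin k → Fin d × Bool | ∀ i, 0 ≤ disp σ i} : ℝ) ≤
      #box + ∑ i, (#(far i) : ℝ) := by
    exact_mod_cast (card_le_card horthant).trans
      ((card_union_le _ _).trans (add_le_add_right card_biUnion_le _))
  have horth : (2 * d : ℝ) ^ k ≤ 2 ^ d * #{σ : Fin k → Fin d × Bool | ∀ i, 0 ≤ disp σ i} := by
    exact_mod_cast pow_le_two_pow_mul_card_disp_nonneg k
  have hfar := two_pow_mul_sum_card_abs_disp_gt_le hd hr hk
  have := mul_le_mul_of_nonneg_left hcard (by positivity : (0 : ℝ) ≤ 2 ^ d)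
  rw [pow_succ] at hfar ⊢
  linarith

open Classical in
lemma pow_le_card_add_disp_mem_ball (hd : 0 < d) {r : ℝ} (hr : 0 < r) {x : V d}
    (hx : x ∈ ball d 0 r) {k : ℕ} (hk : 2 ^ (d + 1) * k ≤ r ^ 2) :
    (2 * d : ℝ) ^ k ≤ 2 ^ (d + 1) * #{σ : Fin k → Fin d × Bool | x + disp σ ∈ ball d 0 r} := by
  refine (pow_le_card_disp_mem_box hd hr hk).trans
    (mul_le_mul_of_nonneg_left ?_ (by positivity))
  suffices h : #{σ : Fin k → Fin d × Bool | ∀ i, 0 ≤ disp σ i ∧ (disp σ i : ℝ) ≤ r} ≤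
      #{σ : Fin k → Fin d × Bool | x + disp σ ∈ ball d 0 r} by exact_mod_cast h
  -- reflect the coordinates with `0 ≤ x i`, so that displacements in `[0, r]^d` point to the origin
  refine card_le_card_of_injOn (flipSigns fun i => decide (0 ≤ x i)) (fun σ hσ => ?_)
    (flipSigns_injective _ _).injOn
  simp only [coe_filter, mem_univ, true_and, Set.mem_ofPred_eq, mem_ball_zero] at hσ hx ⊢
  intro i
  obtain ⟨hσ0, hσr⟩ := hσ i
  have hσ0' : (0 : ℝ) ≤ disp σ i := by exact_mod_cast hσ0
  have := abs_le.1 (hx i)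
  rw [Pi.add_apply, disp_flipSigns_apply, abs_le]
  by_cases hxi : 0 ≤ x i
  · have : (0 : ℝ) ≤ x i := by exact_mod_cast hxi
    simp only [hxi, decide_true, if_true]
    push_cast
    constructor <;> linarith
  · have : (x i : ℝ) < 0 := by exact_mod_cast not_le.1 hxi
    simp only [hxi, decide_false, if_false, Bool.false_eq_true]
    push_cast
    constructor <;> linarith

def NoReturn (A : Set (V d)) (η : PathData d) : Prop :=
  ∀ k, 1 ≤ k → k ≤ η.len → pos d η k ∉ A

lemma escProbT_eq_tsum (A : Set (V d)) (x : V d) :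
    escProbT d T A x = ∑' η : {η : PathData d // η.start = x ∧ NoReturn A η}, kWeight d T η := by
  classical
  refine (tsum_congr fun η => ?_).trans (tsum_subtype {η | η.start = x ∧ NoReturn A η} _).symm
  simp only [Set.indicator_apply, Set.mem_ofPred_eq, NoReturn]
  congr

lemma escProbT_nonneg (hT : 0 < T) (A : Set (V d)) (x : V d) : 0 ≤ escProbT d T A x := by
  rw [escProbT_eq_tsum]
  exact tsum_nonneg fun η => by unfold kWeight; positivity

lemma kWeight_append (y : V d) {k : ℕ} (σ : Fin k → Fin d × Bool) (η : PathData d) :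
    kWeight d T ⟨y, k + η.len, Fin.append σ η.steps⟩ =
      (T / (T + 1) * (1 / (2 * d))) ^ k * kWeight d T η := by
  simp only [kWeight]
  ring

lemma sum_kWeight_of_len (hd : 0 < d) (y : V d) (n : ℕ) :
    ∑ τ : Fin n → Fin d × Bool, kWeight d T ⟨y, n, τ⟩ = (T / (T + 1)) ^ n * (1 / (T + 1)) := by
  have hd' : (2 * d : ℝ) ^ n * (1 / (2 * d)) ^ n = 1 := by
    rw [← mul_pow, mul_one_div_cancel (by positivity), one_pow]
  simp only [kWeight, sum_const, card_univ, Fintype.card_fun, Fintype.card_prod, Fintype.card_fin,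
    Fintype.card_bool, nsmul_eq_mul]
  push_cast
  linear_combination (T / (T + 1)) ^ n * (1 / (T + 1)) * hd'

lemma hasSum_kWeight (hT : 0 < T) (hd : 0 < d) (y : V d) :
    HasSum (fun p : Σ n, Fin n → Fin d × Bool => kWeight d T ⟨y, p.1, p.2⟩) 1 := by
  have hq0 : 0 ≤ T / (T + 1) := by positivity
  have hq1 : T / (T + 1) < 1 := (div_lt_one (by linarith)).2 (by linarith)
  have hgeom : HasSum (fun n : ℕ => (T / (T + 1)) ^ n * (1 / (T + 1))) 1 := by
    have hsum : (1 - T / (T + 1))⁻¹ * (1 / (T + 1)) = 1 := by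
      rw [show 1 - T / (T + 1) = 1 / (T + 1) by field_simp; ring]
      exact inv_mul_cancel₀ (by positivity)
    simpa only [hsum] using (hasSum_geometric_of_lt_one hq0 hq1).mul_right (1 / (T + 1))
  have hfiber (n : ℕ) := sum_kWeight_of_len (T := T) hd y n ▸ hasSum_fintype
    (fun τ : Fin n → Fin d × Bool => kWeight d T ⟨y, n, τ⟩)
  refine hgeom.sigma_of_hasSum hfiber ?_
  exact (summable_sigma_of_nonneg fun p => by unfold kWeight; positivity).2
    ⟨fun n => (hfiber n).summable, by simpa only [(hfiber _).tsum_eq] using hgeom.summable⟩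

lemma tsum_kWeight_noReturn (A : Set (V d)) (x : V d) :
    ∑' η : {η : PathData d // η.start = x ∧ η.start ∈ A ∧ NoReturn A η}, kWeight d T η =
      A.indicator (escProbT d T A) x := by
  by_cases hx : x ∈ A
  · rw [Set.indicator_of_mem hx, escProbT_eq_tsum]
    let e : {η : PathData d // η.start = x ∧ η.start ∈ A ∧ NoReturn A η} ≃
        {η : PathData d // η.start = x ∧ NoReturn A η} :=
      Equiv.subtypeEquivRight fun η => ⟨fun h => ⟨h.1, h.2.2⟩, fun h => ⟨h.1, h.1 ▸ hx, h.2⟩⟩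
    exact e.tsum_eq fun η => kWeight d T η.1
  · rw [Set.indicator_of_notMem hx]
    have : IsEmpty {η : PathData d // η.start = x ∧ η.start ∈ A ∧ NoReturn A η} :=
      ⟨fun η => hx (η.2.1 ▸ η.2.2.1)⟩
    exact tsum_empty

lemma le_of_append_eq_of_noReturn {A : Set (V d)} {y : V d} {k k' : ℕ} {σ : Fin k → Fin d × Bool}
    {σ' : Fin k' → Fin d × Bool} {η η' : PathData d} (hη : η.start = y + disp σ)
    (hesc : NoReturn A η) (hA : y + disp σ' ∈ A)
    (h : (⟨k + η.len, Fin.append σ η.steps⟩ : Σ n, Fin n → Fin d × Bool) =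
      ⟨k' + η'.len, Fin.append σ' η'.steps⟩) : k' ≤ k := by
  -- if `k < k'`, the common path is in `A` at time `k'`, which is a return of `η`
  by_contra! hlt
  obtain ⟨j, rfl⟩ := Nat.exists_eq_add_of_lt hlt
  have hlen : k + η.len = k + j + 1 + η'.len := congrArg Sigma.fst h
  have hpos := congrArg (fun p : Σ n, Fin n → Fin d × Bool => pathOf d p.1 y p.2 (k + (j + 1))) h
  simp only at hpos
  have hstart := pathOf_append (k + j + 1) η'.len y σ' η'.steps 0
  rw [add_zero, pathOf_zero] at hstart
  rw [pathOf_append, ← hη, ← add_assoc, hstart] at hpos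
  exact hesc (j + 1) (by omega) (by omega) (by rw [pos, hpos]; exact hA)

/-- A killed path from `y` cut at its last visit `k ≤ m` to `A`: the first `k` steps, followed by
a path from the point reached that never returns to `A`. -/
abbrev LastExit (A : Set (V d)) (y : V d) (m : ℕ) : Type :=
  Σ b : (Σ k : Fin (m + 1), Fin k → Fin d × Bool),
    {η : PathData d // η.start = y + disp b.2 ∧ η.start ∈ A ∧ NoReturn A η}

def LastExit.path {A : Set (V d)} {y : V d} {m : ℕ} (z : LastExit A y m) :
    Σ n, Fin n → Fin d × Bool :=
  ⟨z.1.1 + z.2.1.len, Fin.append z.1.2 z.2.1.steps⟩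

lemma LastExit.path_injective (A : Set (V d)) (y : V d) (m : ℕ) :
    Function.Injective (LastExit.path (A := A) (y := y) (m := m)) := by
  rintro ⟨⟨k, σ⟩, η, hη, hA, hesc⟩ ⟨⟨k', σ'⟩, η', hη', hA', hesc'⟩ h
  obtain rfl : k = k' := Fin.ext <| le_antisymm
    (le_of_append_eq_of_noReturn hη' hesc' (hη ▸ hA) h.symm)
    (le_of_append_eq_of_noReturn hη hesc (hη' ▸ hA') h)
  rcases η with ⟨s, n, τ⟩
  rcases η' with ⟨s', n', τ'⟩
  simp only [LastExit.path, Sigma.mk.inj_iff] at h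
  obtain rfl : n = n' := by omega
  have happ : (σ, τ) = (σ', τ') := (Fin.appendEquiv _ _).injective (eq_of_heq h.2)
  obtain ⟨rfl, rfl⟩ := Prod.mk.inj happ
  obtain rfl : s = s' := hη.trans hη'.symm
  rfl

lemma sum_pow_mul_sum_indicator_escProbT_le_one (hT : 0 < T) (hd : 0 < d) (A : Set (V d))
    (y : V d) (m : ℕ) :
    ∑ k ∈ range (m + 1), (T / (T + 1) * (1 / (2 * d))) ^ k *
      ∑ σ : Fin k → Fin d × Bool, A.indicator (escProbT d T A) (y + disp σ) ≤ 1 := by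
  set g := fun p : Σ n, Fin n → Fin d × Bool => kWeight d T ⟨y, p.1, p.2⟩
  have hg : HasSum g 1 := hasSum_kWeight hT hd y
  have hinj := LastExit.path_injective A y m
  have hsum : Summable (g ∘ LastExit.path) := hg.summable.comp_injective hinj
  calc _ = ∑' z : LastExit A y m, (g ∘ LastExit.path) z := by
        symm
        rw [hsum.tsum_sigma, tsum_fintype, Fintype.sum_sigma, ← Fin.sum_univ_eq_sum_range]
        refine sum_congr rfl fun k _ => ?_
        rw [mul_sum]
        refine sum_congr rfl fun σ _ => ?_
        rw [← tsum_kWeight_noReturn, ← tsum_mul_left]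
        exact tsum_congr fun η => kWeight_append y σ η.1
    _ ≤ ∑' p, g p :=
        tsum_comp_le_tsum_of_inj hg.summable (fun p => by simp only [g, kWeight]; positivity) hinj
    _ = 1 := hg.tsum_eq

/-- The expected number of visits to `A` up to time `m` of the killed walk from `x`, with its steps
reversed as they come out of the last-exit decomposition. -/
noncomputable def visitWeight (d : ℕ) (T : ℝ) (A : Finset (V d)) (m : ℕ) (x : V d) : ℝ :=
  ∑ k ∈ range (m + 1),
    (T / (T + 1) * (1 / (2 * d))) ^ k * #{σ : Fin k → Fin d × Bool | x - disp σ ∈ A}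

lemma sum_indicator_add (A : Finset (V d)) (f : V d → ℝ) (v : V d) :
    ∑ y ∈ A, (A : Set (V d)).indicator f (y + v) = ∑ x ∈ A, if x - v ∈ A then f x else 0 := by
  simp only [Set.indicator_apply, mem_coe, ← sum_filter]
  refine sum_nbij' (· + v) (· - v) ?_ ?_ ?_ ?_ ?_ <;> intro x hx <;> simp_all [mem_filter]

lemma sum_escProbT_mul_visitWeight_le (hT : 0 < T) (hd : 0 < d) (A : Finset (V d)) (m : ℕ) :
    ∑ x ∈ A, escProbT d T A x * visitWeight d T A m x ≤ #A := by
  have hshift (k : ℕ) : ∑ y ∈ A, ∑ σ : Fin k → Fin d × Bool,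
      (A : Set (V d)).indicator (escProbT d T A) (y + disp σ) =
        ∑ x ∈ A, escProbT d T A x * #{σ : Fin k → Fin d × Bool | x - disp σ ∈ A} := by
    rw [sum_comm]
    simp_rw [sum_indicator_add A]
    rw [sum_comm]
    refine sum_congr rfl fun x _ => ?_
    rw [← sum_filter, sum_const, nsmul_eq_mul, mul_comm]
  calc ∑ x ∈ A, escProbT d T A x * visitWeight d T A m x
      = ∑ k ∈ range (m + 1), (T / (T + 1) * (1 / (2 * d))) ^ k *
          ∑ x ∈ A, escProbT d T A x * #{σ : Fin k → Fin d × Bool | x - disp σ ∈ A} := by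
        simp only [visitWeight, mul_sum]
        rw [sum_comm]
        exact sum_congr rfl fun k _ => sum_congr rfl fun x _ => mul_left_comm _ _ _
    _ = ∑ y ∈ A, ∑ k ∈ range (m + 1), (T / (T + 1) * (1 / (2 * d))) ^ k *
          ∑ σ : Fin k → Fin d × Bool, (A : Set (V d)).indicator (escProbT d T A) (y + disp σ) := by
        simp only [← hshift, mul_sum]
        exact sum_comm
    _ ≤ ∑ _y ∈ A, (1 : ℝ) :=
        sum_le_sum fun y _ => sum_pow_mul_sum_indicator_escProbT_le_one hT hd A y m
    _ = #A := by simp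

lemma capT_mul_le_card (hT : 0 < T) (hd : 0 < d) (A : Finset (V d)) (m : ℕ) {c : ℝ}
    (hc : ∀ x ∈ A, c ≤ visitWeight d T A m x) : capT d T A * c ≤ #A := by
  rw [capT, Finset.tsum_subtype', sum_mul]
  exact (sum_le_sum fun x hx => mul_le_mul_of_nonneg_left (hc x hx) (escProbT_nonneg hT _ x)).trans
    (sum_escProbT_mul_visitWeight_le hT hd A m)

noncomputable def ballFinset (d : ℕ) (r : ℝ) : Finset (V d) :=
  Fintype.piFinset fun _ => Icc (-⌊r⌋) ⌊r⌋

lemma coe_ballFinset (d : ℕ) (r : ℝ) : (ballFinset d r : Set (V d)) = ball d 0 r := by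
  ext z
  simp only [ballFinset, Fintype.coe_piFinset, Set.mem_pi, Set.mem_univ, coe_Icc, Set.mem_Icc,
    true_implies, mem_ball_zero]
  refine forall_congr' fun i => ?_
  rw [← abs_le, ← Int.cast_abs, Int.le_floor]

lemma neg_mem_ball_zero {r : ℝ} {z : V d} : -z ∈ ball d 0 r ↔ z ∈ ball d 0 r := by
  simp [mem_ball_zero]

lemma card_ballFinset_le {r : ℝ} (hr : 1 ≤ r) : (#(ballFinset d r) : ℝ) ≤ (3 * r) ^ d := by
  have hfloor : (0 : ℤ) ≤ ⌊r⌋ := Int.floor_nonneg.2 (by linarith)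
  rw [ballFinset, Fintype.card_piFinset, prod_const, card_univ, Fintype.card_fin, Int.card_Icc,
    Nat.cast_pow]
  refine pow_le_pow_left₀ (by positivity) ?_ d
  rw [show ⌊r⌋ + 1 - -⌊r⌋ = 2 * ⌊r⌋ + 1 by ring]
  have : ((2 * ⌊r⌋ + 1).toNat : ℝ) = 2 * ⌊r⌋ + 1 := by
    exact_mod_cast Int.toNat_of_nonneg (by omega)
  rw [this]
  linarith [Int.floor_le r]

lemma half_le_pow_div_add_one (hT : 0 ≤ T) {k : ℕ} (hk : 2 * k ≤ T) :
    1 / 2 ≤ (T / (T + 1)) ^ k := by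
  have hstep : -2 ≤ -(1 / (T + 1)) := by
    have : 1 / (T + 1) ≤ 1 := by rw [div_le_one (by linarith)]; linarith
    linarith
  have h := one_add_mul_le_pow hstep k
  rw [show 1 + -(1 / (T + 1)) = T / (T + 1) by field_simp; ring] at h
  have : (k : ℝ) * (1 / (T + 1)) ≤ 1 / 2 := by
    rw [mul_one_div, div_le_iff₀ (by linarith)]
    linarith
  linarith

open Classical in
lemma div_le_visitWeight_ballFinset (hd : 0 < d) (hT : 0 ≤ T) {r : ℝ} (hr : 0 < r) {m : ℕ}
    (hm : 2 ^ (d + 1) * m ≤ r ^ 2) (hmT : 2 * m ≤ T) {x : V d} (hx : x ∈ ball d 0 r) :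
    (m + 1) / 2 ^ (d + 2) ≤ visitWeight d T (ballFinset d r) m x := by
  have hterm : ∀ k ∈ range (m + 1), 1 / 2 ^ (d + 2) ≤ (T / (T + 1) * (1 / (2 * d))) ^ k *
      #{σ : Fin k → Fin d × Bool | x - disp σ ∈ ballFinset d r} := by
    intro k hk
    have hkm : (k : ℝ) ≤ m := by exact_mod_cast Nat.lt_succ_iff.1 (mem_range.1 hk)
    have hcount := pow_le_card_add_disp_mem_ball hd hr (neg_mem_ball_zero.2 hx)
      ((mul_le_mul_of_nonneg_left hkm (by positivity)).trans hm)
    have hfilter : #{σ : Fin k → Fin d × Bool | x - disp σ ∈ ballFinset d r} =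
        #{σ : Fin k → Fin d × Bool | -x + disp σ ∈ ball d 0 r} := by
      congr 1
      refine filter_congr fun σ _ => ?_
      rw [← mem_coe, coe_ballFinset, ← neg_mem_ball_zero, neg_sub, neg_add_eq_sub]
    have hq := half_le_pow_div_add_one hT (k := k) (by linarith)
    have hcancel : (T / (T + 1) * (1 / (2 * d))) ^ k * (2 * d) ^ k = (T / (T + 1)) ^ k := by
      rw [← mul_pow, mul_assoc, one_div_mul_cancel (by positivity), mul_one]
    rw [hfilter]
    calc (1 : ℝ) / 2 ^ (d + 2) = 1 / 2 * (1 / 2 ^ (d + 1)) := by ring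
      _ ≤ (T / (T + 1)) ^ k * (1 / 2 ^ (d + 1)) :=
          mul_le_mul_of_nonneg_right hq (by positivity)
      _ = (T / (T + 1) * (1 / (2 * d))) ^ k * ((2 * d) ^ k / 2 ^ (d + 1)) := by
          rw [← hcancel]; ring
      _ ≤ _ := by
          refine mul_le_mul_of_nonneg_left ?_ (by positivity)
          rw [div_le_iff₀ (by positivity)]
          linarith
  calc ((m : ℝ) + 1) / 2 ^ (d + 2) = ∑ _k ∈ range (m + 1), (1 : ℝ) / 2 ^ (d + 2) := by
        rw [sum_const, card_range, nsmul_eq_mul]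
        push_cast
        ring
    _ ≤ _ := sum_le_sum hterm

lemma capT_ball_mul_le (hd : 0 < d) (hT : 0 < T) {r : ℝ} (hr : 1 ≤ r) {m : ℕ}
    (hm : 2 ^ (d + 1) * m ≤ r ^ 2) (hmT : 2 * m ≤ T) :
    capT d T (ball d 0 r) * ((m + 1) / 2 ^ (d + 2)) ≤ (3 * r) ^ d := by
  rw [← coe_ballFinset]
  refine (capT_mul_le_card hT hd _ m fun x hx => ?_).trans (card_ballFinset_le hr)
  rw [← mem_coe, coe_ballFinset] at hx
  exact div_le_visitWeight_ballFinset hd hT.le (by linarith) hm hmT hx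

lemma capT_ball_le (hd : 2 ≤ d) {r C : ℝ} (hr : 1 ≤ r) (hC : 2 ^ (d + 1) ≤ C)
    (hrT : 2 * r ^ 2 ≤ C * T) :
    capT d T (ball d 0 r) ≤ 2 ^ (d + 2) * 3 ^ d * C * r ^ (d - 2) := by
  have hC0 : 0 < C := lt_of_lt_of_le (by positivity) hC
  have hT : 0 < T := pos_of_mul_pos_right (by nlinarith) hC0.le
  set m := ⌊r ^ 2 / C⌋₊
  have hCm : C * m ≤ r ^ 2 := by
    rw [← le_div_iff₀' hC0]; exact Nat.floor_le (by positivity)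
  have hm_lt : r ^ 2 < C * (m + 1) := by
    rw [← div_lt_iff₀' hC0]; exact Nat.lt_floor_add_one _
  have hcap := capT_ball_mul_le (T := T) (by omega) hT hr (m := m)
    ((mul_le_mul_of_nonneg_right hC m.cast_nonneg).trans hCm) (by nlinarith)
  have hcap0 : 0 ≤ capT d T (ball d 0 r) := by
    unfold capT; exact tsum_nonneg fun x => escProbT_nonneg hT _ _
  have hrd : (3 * r) ^ d = 3 ^ d * r ^ (d - 2) * r ^ 2 := by
    rw [mul_pow, mul_assoc, ← pow_add, Nat.sub_add_cancel hd]
  refine le_of_mul_le_mul_right ?_ (by positivity : 0 < r ^ 2)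
  calc capT d T (ball d 0 r) * r ^ 2
      ≤ capT d T (ball d 0 r) * (C * (m + 1)) := mul_le_mul_of_nonneg_left hm_lt.le hcap0
    _ = 2 ^ (d + 2) * C * (capT d T (ball d 0 r) * ((m + 1) / 2 ^ (d + 2))) := by
        field_simp
    _ ≤ 2 ^ (d + 2) * C * (3 * r) ^ d := mul_le_mul_of_nonneg_left hcap (by positivity)
    _ = 2 ^ (d + 2) * 3 ^ d * C * r ^ (d - 2) * r ^ 2 := by rw [hrd]; ring

end

theorem statement11_general (d : ℕ) (hd : 3 ≤ d) (a : ℝ) (ha0 : 0 < a) (ha : a < 0.3)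
    (b : ℝ) :
    ∃ c : ℝ, 0 < c ∧ ∀ T : ℝ, 1 ≤ ⌊b * Real.sqrt T⌋ →
      capT d T (ball d 0 ((⌊b * Real.sqrt T⌋ : ℝ) ^ a)) ≤
        c * (⌊b * Real.sqrt T⌋ : ℝ) ^ (a * ((d : ℝ) - 2)) := by
  refine ⟨2 ^ (d + 2) * 3 ^ d * (2 ^ (d + 1) + 2 * b ^ 2), by positivity, fun T hn => ?_⟩
  set n : ℤ := ⌊b * Real.sqrt T⌋
  have hn1 : (1 : ℝ) ≤ n := by exact_mod_cast hn
  have hT : 0 ≤ T := by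
    by_contra! hT
    simp [n, Real.sqrt_eq_zero'.2 hT.le] at hn
  have hnT : (n : ℝ) ^ 2 ≤ b ^ 2 * T := by
    calc (n : ℝ) ^ 2 ≤ (b * Real.sqrt T) ^ 2 :=
          pow_le_pow_left₀ (by linarith) (Int.floor_le _) 2
      _ = b ^ 2 * T := by rw [mul_pow, Real.sq_sqrt hT]
  have hrn : (n : ℝ) ^ a ≤ n := Real.rpow_le_self_of_one_le hn1 (by norm_num at ha; linarith)
  have hr1 : 1 ≤ (n : ℝ) ^ a := Real.one_le_rpow hn1 ha0.le
  have hexp : (n : ℝ) ^ (a * ((d : ℝ) - 2)) = ((n : ℝ) ^ a) ^ (d - 2) := by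
    rw [Real.rpow_mul (by linarith), ← Real.rpow_natCast, Nat.cast_sub (by omega)]
    norm_num
  rw [hexp]
  refine capT_ball_le (by omega) hr1 (le_add_of_nonneg_right (by positivity)) ?_
  have hrn2 := pow_le_pow_left₀ (by linarith) hrn 2
  have := mul_nonneg (pow_pos two_pos (d + 1)).le hT
  linarith

/-- with `n = ⌊b√T⌋` and `0 < a < 0.3`, the killed capacity satisfies
`cap^{(T)}(B(0, n^a)) ≤ c · n^{a(d−2)}`. -/
theorem statement11 (d : ℕ) (hd : 3 ≤ d) (a : ℝ) (ha0 : 0 < a) (ha : a < 0.3)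
    (b : ℝ) (hb : 0 < b) :
    ∃ c : ℝ, 0 < c ∧ ∀ T : ℝ, 1 ≤ ⌊b * Real.sqrt T⌋ →
      capT d T (ball d 0 ((⌊b * Real.sqrt T⌋ : ℝ) ^ a)) ≤
        c * (⌊b * Real.sqrt T⌋ : ℝ) ^ (a * ((d : ℝ) - 2)) :=
  statement11_general d hd a ha0 ha b

end Paper
end

section
/- Let {X_j}, j = 1,...,m, be independent nonnegative-compatible random variables (not necessarily nonnegative) with A_t^+ = Σ_j E(|X_j|^t 1_{X_j > 0}) < ∞ for some 0 < t ≤ 1. Then for any x > 0 and y ≥ max_j y_j with y_j > 0, P(X_1 + ... + X_m ≥ x) ≤ Σ_j P(X_j ≥ y_j) + (e·A_t^+ / (x·y^{t−1}))^{x/y}. -/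
/-!
Truncate each `X j` at `y j` (values `≥ y j` become `0`). Off the union of the events
`{y j ≤ X j}` the sum equals the truncated sum, whose terms are bounded above by `Y`. For `u ≤ Y`
and `h ≥ 0` convexity gives `exp (h u) ≤ 1 + exp (h Y) Y⁻ᵗ (u⁺)ᵗ`, so by independence the
moment generating function of the truncated sum is at most `exp (exp (h Y) A / Yᵗ)`. Chernoff's
bound, optimised at `h = log (x Y^(t-1) / A) / Y`, yields the second term.
-/

open MeasureTheory Real ProbabilityTheory

noncomputable def posRpow (t u : ℝ) : ℝ := if 0 < u then |u| ^ t else 0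

noncomputable def truncateAt (y u : ℝ) : ℝ := if u < y then u else 0

lemma posRpow_nonneg (t u : ℝ) : 0 ≤ posRpow t u := by
  unfold posRpow; split <;> positivity

lemma measurable_posRpow (t : ℝ) : Measurable (posRpow t) :=
  Measurable.ite measurableSet_Ioi (measurable_id.abs.pow_const t) measurable_const

lemma measurable_truncateAt (y : ℝ) : Measurable (truncateAt y) :=
  Measurable.ite (measurableSet_lt measurable_id measurable_const) measurable_id measurable_const

lemma truncateAt_le {y Y : ℝ} (hyY : y ≤ Y) (hY : 0 ≤ Y) (u : ℝ) : truncateAt y u ≤ Y := by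
  unfold truncateAt; split <;> linarith

lemma posRpow_truncateAt_le (t y u : ℝ) : posRpow t (truncateAt y u) ≤ posRpow t u := by
  unfold truncateAt
  split
  · rfl
  · simp only [posRpow, lt_irrefl, if_false]; exact posRpow_nonneg t u

/-- On `(0, Y]` the exponential lies below its chord through `0` and `Y`, and `u / Y ≤ (u / Y) ^ t`
there since `t ≤ 1`. -/
lemma exp_mul_le_one_add_posRpow {t h u Y : ℝ} (ht : t ≤ 1) (hh : 0 ≤ h) (hY : 0 < Y)
    (hu : u ≤ Y) : exp (h * u) ≤ 1 + exp (h * Y) / Y ^ t * posRpow t u := by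
  unfold posRpow
  split_ifs with hpos
  · rw [abs_of_pos hpos]
    have hq : u / Y ≤ 1 := (div_le_one hY).2 hu
    have hq0 : 0 ≤ u / Y := (div_pos hpos hY).le
    have hchord : exp (h * u) ≤ (1 - u / Y) + u / Y * exp (h * Y) := by
      have := convexOn_exp.2 (Set.mem_univ 0) (Set.mem_univ (h * Y)) (sub_nonneg.2 hq) hq0
        (by ring)
      simp only [smul_eq_mul, mul_zero, zero_add, exp_zero, mul_one] at this
      rwa [show u / Y * (h * Y) = h * u by field_simp] at this
    have hpow : u / Y ≤ u ^ t / Y ^ t := by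
      rw [← div_rpow hpos.le hY.le]
      simpa using rpow_le_rpow_of_exponent_ge (div_pos hpos hY) hq ht
    calc exp (h * u) ≤ (1 - u / Y) + u / Y * exp (h * Y) := hchord
      _ ≤ 1 + u ^ t / Y ^ t * exp (h * Y) := by
        nlinarith [mul_le_mul_of_nonneg_right hpow (exp_pos (h * Y)).le]
      _ = 1 + exp (h * Y) / Y ^ t * u ^ t := by ring
  · rw [mul_zero, add_zero, exp_le_one_iff]
    exact mul_nonpos_of_nonneg_of_nonpos hh (not_lt.1 hpos)

section Measure

variable {Ω : Type*} [MeasurableSpace Ω] {P : Measure Ω}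

lemma integrable_posRpow_truncateAt {X : Ω → ℝ} {t : ℝ} (hX : Measurable X)
    (hint : Integrable (fun ω => posRpow t (X ω)) P) (y : ℝ) :
    Integrable (fun ω => posRpow t (truncateAt y (X ω))) P :=
  hint.mono ((measurable_posRpow t).comp ((measurable_truncateAt y).comp hX)).aestronglyMeasurable
    (Filter.Eventually.of_forall fun ω => by
      rw [norm_of_nonneg (posRpow_nonneg _ _), norm_of_nonneg (posRpow_nonneg _ _)]
      exact posRpow_truncateAt_le t y (X ω))

lemma integrable_exp_mul_of_le [IsFiniteMeasure P] {Z : Ω → ℝ} {h Y : ℝ} (hZ : Measurable Z)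
    (hh : 0 ≤ h) (hZY : ∀ ω, Z ω ≤ Y) : Integrable (fun ω => exp (h * Z ω)) P :=
  Integrable.mono' (integrable_const (exp (h * Y))) (hZ.const_mul h).exp.aestronglyMeasurable
    (Filter.Eventually.of_forall fun ω => by
      rw [norm_eq_abs, abs_exp]
      exact exp_le_exp.2 (mul_le_mul_of_nonneg_left (hZY ω) hh))

lemma mgf_le_exp_integral_posRpow [IsProbabilityMeasure P] {Z : Ω → ℝ} {t h Y : ℝ}
    (hZ : Measurable Z) (ht : t ≤ 1) (hh : 0 ≤ h) (hY : 0 < Y) (hZY : ∀ ω, Z ω ≤ Y)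
    (hint : Integrable (fun ω => posRpow t (Z ω)) P) :
    mgf Z P h ≤ exp (exp (h * Y) / Y ^ t * ∫ ω, posRpow t (Z ω) ∂P) := by
  set c := exp (h * Y) / Y ^ t
  calc mgf Z P h ≤ ∫ ω, (1 + c * posRpow t (Z ω)) ∂P :=
        integral_mono (integrable_exp_mul_of_le hZ hh hZY)
          ((integrable_const 1).add (hint.const_mul c))
          fun ω => exp_mul_le_one_add_posRpow ht hh hY (hZY ω)
    _ = 1 + c * ∫ ω, posRpow t (Z ω) ∂P := by
        rw [integral_add (integrable_const 1) (hint.const_mul c), integral_const_mul]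
        simp
    _ ≤ exp (c * ∫ ω, posRpow t (Z ω) ∂P) := by
        linarith [add_one_le_exp (c * ∫ ω, posRpow t (Z ω) ∂P)]

lemma measureReal_sum_ge_le_exp [IsProbabilityMeasure P] {ι : Type*} [Fintype ι] {Z : ι → Ω → ℝ}
    (hZ : ∀ j, Measurable (Z j)) (hindep : iIndepFun Z P) {t h x Y : ℝ} (ht : t ≤ 1)
    (hh : 0 ≤ h) (hY : 0 < Y) (hZY : ∀ j ω, Z j ω ≤ Y)
    (hint : ∀ j, Integrable (fun ω => posRpow t (Z j ω)) P) :
    P.real {ω | x ≤ ∑ j, Z j ω} ≤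
      exp (-h * x + exp (h * Y) / Y ^ t * ∑ j, ∫ ω, posRpow t (Z j ω) ∂P) := by
  have hchernoff := measure_ge_le_exp_mul_mgf (μ := P) (X := ∑ j, Z j) x hh
    (hindep.integrable_exp_mul_sum hZ fun j _ => integrable_exp_mul_of_le (hZ j) hh (hZY j))
  simp only [Finset.sum_apply] at hchernoff
  have hmgf : mgf (∑ j, Z j) P h ≤
      exp (exp (h * Y) / Y ^ t * ∑ j, ∫ ω, posRpow t (Z j ω) ∂P) := by
    rw [hindep.mgf_sum hZ, Finset.mul_sum, exp_sum]
    exact Finset.prod_le_prod (fun j _ => mgf_nonneg)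
      fun j _ => mgf_le_exp_integral_posRpow (hZ j) ht hh hY (hZY j) (hint j)
  calc P.real {ω | x ≤ ∑ j, Z j ω} ≤ exp (-h * x) * mgf (∑ j, Z j) P h := hchernoff
    _ ≤ _ := by
      rw [exp_add]
      exact mul_le_mul_of_nonneg_left hmgf (exp_pos _).le

lemma measureReal_sum_ge_le_add_truncateAt [IsFiniteMeasure P] {ι : Type*} [Fintype ι]
    (X : ι → Ω → ℝ) (y : ι → ℝ) (x : ℝ) :
    P.real {ω | x ≤ ∑ j, X j ω} ≤
      ∑ j, P.real {ω | y j ≤ X j ω} + P.real {ω | x ≤ ∑ j, truncateAt (y j) (X j ω)} := by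
  have hsub : {ω | x ≤ ∑ j, X j ω} ⊆
      (⋃ j, {ω | y j ≤ X j ω}) ∪ {ω | x ≤ ∑ j, truncateAt (y j) (X j ω)} := by
    intro ω hω
    by_cases hbig : ∃ j, y j ≤ X j ω
    · exact Or.inl (Set.mem_iUnion.2 hbig)
    · push Not at hbig
      right
      simpa only [Set.mem_ofPred_eq, truncateAt, if_pos (hbig _)] using hω
  calc P.real {ω | x ≤ ∑ j, X j ω}
      ≤ P.real ((⋃ j, {ω | y j ≤ X j ω}) ∪ {ω | x ≤ ∑ j, truncateAt (y j) (X j ω)}) :=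
        measureReal_mono hsub
    _ ≤ _ := (measureReal_union_le _ _).trans (by gcongr; exact measureReal_iUnion_fintype_le _)

end Measure

lemma le_rpow_of_forall_le_exp {p a b c : ℝ} (ha : 0 < a) (hb : 0 < b) (hc : 0 ≤ c) (hp : p ≤ 1)
    (hbound : ∀ h, 0 ≤ h → p ≤ exp (-h * a + c * exp (h * b))) :
    p ≤ (exp 1 * c * b / a) ^ (a / b) := by
  rcases hc.eq_or_lt with rfl | hc
  · have hlim : Filter.Tendsto (fun h => exp (-h * a)) Filter.atTop (nhds 0) := by
      simpa only [Function.comp_def, neg_mul, id] using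
        tendsto_exp_neg_atTop_nhds_zero.comp (Filter.tendsto_id.atTop_mul_const ha)
    refine (ge_of_tendsto hlim ?_).trans (rpow_nonneg (by simp) _)
    filter_upwards [Filter.eventually_ge_atTop 0] with h hh
    simpa using hbound h hh
  set r := a / (c * b) with hr_def
  by_cases hr : r ≤ 1
  · refine hp.trans (one_le_rpow ?_ (div_pos ha hb).le)
    rw [le_div_iff₀ ha]
    have := (div_le_one (mul_pos hc hb)).1 hr
    nlinarith [add_one_le_exp 1]
  · -- the minimiser of `-h * a + c * exp (h * b)` is `h = log r / b`
    have hr1 : 1 < r := not_le.1 hr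
    have hcr : c * r = a / b := by rw [hr_def]; field_simp
    have hlog : log (exp 1 * c * b / a) = 1 - log r := by
      rw [show exp 1 * c * b / a = exp 1 / r by rw [hr_def]; field_simp,
        log_div (exp_pos 1).ne' (by positivity), log_exp]
    calc p ≤ exp (-(log r / b) * a + c * exp (log r / b * b)) :=
          hbound _ (div_nonneg (log_nonneg hr1.le) hb.le)
      _ = exp (log (exp 1 * c * b / a) * (a / b)) := by
        rw [div_mul_cancel₀ _ hb.ne', exp_log (by positivity), hcr, hlog]
        congr 1
        field_simp
        ring
      _ = (exp 1 * c * b / a) ^ (a / b) := (rpow_def_of_pos (by positivity) _).symm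

open Classical in
theorem statement12_general {Ω : Type*} [MeasurableSpace Ω] (P : Measure Ω)
    [IsProbabilityMeasure P] (m : ℕ) (X : Fin m → Ω → ℝ)
    (hX : ∀ j, Measurable (X j))
    (hindep : ProbabilityTheory.iIndepFun X P)
    (t : ℝ) (ht1 : t ≤ 1)
    (hint : ∀ j, Integrable (fun ω => if 0 < X j ω then |X j ω| ^ t else 0) P)
    (x : ℝ) (hx : 0 < x) (y : Fin m → ℝ) (hy : ∀ j, 0 < y j)
    (Y : ℝ) (hY : ∀ j, y j ≤ Y) :
    (P {ω | x ≤ ∑ j, X j ω}).toReal ≤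
      (∑ j, (P {ω | y j ≤ X j ω}).toReal) +
        (Real.exp 1 * (∑ j, ∫ ω, (if 0 < X j ω then |X j ω| ^ t else 0) ∂P) /
            (x * Y ^ (t - 1))) ^ (x / Y) := by
  change P.real _ ≤ ∑ j, P.real _ + (exp 1 * (∑ j, ∫ ω, posRpow t (X j ω) ∂P) / _) ^ _
  replace hint : ∀ j, Integrable (fun ω => posRpow t (X j ω)) P := hint
  set A := ∑ j, ∫ ω, posRpow t (X j ω) ∂P
  rcases isEmpty_or_nonempty (Fin m) with hm | ⟨⟨j₀⟩⟩
  · simp [hx.not_ge, A, rpow_nonneg]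
  have hY0 : 0 < Y := (hy j₀).trans_le (hY j₀)
  set Z := fun j => truncateAt (y j) ∘ X j
  have hZ : ∀ j, Measurable (Z j) := fun j => (measurable_truncateAt _).comp (hX j)
  have hintZ : ∀ j, Integrable (fun ω => posRpow t (Z j ω)) P := fun j =>
    integrable_posRpow_truncateAt (hX j) (hint j) (y j)
  have hAZ : ∑ j, ∫ ω, posRpow t (Z j ω) ∂P ≤ A := Finset.sum_le_sum fun j _ =>
    integral_mono (hintZ j) (hint j) fun ω => posRpow_truncateAt_le _ _ _
  have hA0 : 0 ≤ A := Finset.sum_nonneg fun j _ => integral_nonneg fun ω => posRpow_nonneg t _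
  have htail := le_rpow_of_forall_le_exp hx hY0 (div_nonneg hA0 (rpow_nonneg hY0.le t))
    measureReal_le_one fun h hh => (measureReal_sum_ge_le_exp hZ
      (hindep.comp _ fun j => measurable_truncateAt (y j)) ht1 hh hY0
      (fun j ω => truncateAt_le (hY j) hY0.le _) hintZ).trans (by
        rw [exp_le_exp, div_mul_comm]; gcongr)
  have hbase : exp 1 * (A / Y ^ t) * Y / x = exp 1 * A / (x * Y ^ (t - 1)) := by
    rw [rpow_sub_one hY0.ne']
    field_simp
  rw [← hbase]
  exact (measureReal_sum_ge_le_add_truncateAt X y x).trans (add_le_add_right htail _)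

open Classical in
/-- Nagaev's inequality: for independent random variables `X j` with
`A_t⁺ = Σ_j E(|X_j|^t 1_{X_j > 0}) < ∞` for some `0 < t ≤ 1`, any `x > 0`, `y_j > 0`
and `Y ≥ max_j y_j`,
`P(ΣX_j ≥ x) ≤ Σ_j P(X_j ≥ y_j) + (e·A_t⁺/(x·Y^{t−1}))^{x/Y}`. -/
theorem statement12 {Ω : Type*} [MeasurableSpace Ω] (P : Measure Ω)
    [IsProbabilityMeasure P] (m : ℕ) (X : Fin m → Ω → ℝ)
    (hX : ∀ j, Measurable (X j))
    (hindep : ProbabilityTheory.iIndepFun X P)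
    (t : ℝ) (ht0 : 0 < t) (ht1 : t ≤ 1)
    (hint : ∀ j, Integrable (fun ω => if 0 < X j ω then |X j ω| ^ t else 0) P)
    (x : ℝ) (hx : 0 < x) (y : Fin m → ℝ) (hy : ∀ j, 0 < y j)
    (Y : ℝ) (hY : ∀ j, y j ≤ Y) :
    (P {ω | x ≤ ∑ j, X j ω}).toReal ≤
      (∑ j, (P {ω | y j ≤ X j ω}).toReal) +
        (Real.exp 1 * (∑ j, ∫ ω, (if 0 < X j ω then |X j ω| ^ t else 0) ∂P) /
            (x * Y ^ (t - 1))) ^ (x / Y) :=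
  statement12_general P m X hX hindep t ht1 hint x hx y hy Y hY
end

section
/- Let events E_1, ..., E_{2^m} satisfy the recursive bound P(∩_{i=1}^{2^j} E_i^{(block)}) ≤ P(∩ first half)·P(∩ second half) + 2e^{−cT·2^j} at every dyadic level j ≤ m, and P(E_i) ≤ ε for each i with ε + 2e^{−cT} < 1. Then P(∩_{i=1}^{2^m} E_i) ≤ (ε + 2e^{−cT})^{2^m}. -/
open scoped BigOperators
open MeasureTheory

/-!
Put `β = e^{-cT}` and `δ = ε + 2β`. By induction on the level `j`, every dyadic block of `2^j`
events has probability at most `δ^{2^j} - β^{2^j}`: if both halves obey this bound with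
`x = δ^{2^j}` and `y = β^{2^j}`, the recursion gives at most `(x - y)^2 + 2y^2`, which is
`≤ x^2 - y^2` exactly when `2y ≤ x`, and `2β^{2^j} ≤ (2β)^{2^j} ≤ δ^{2^j}`.
-/

lemma mul_add_two_mul_sq_le_sq_sub_sq {a b x y : ℝ} (ha : 0 ≤ a) (hax : a ≤ x - y)
    (hbx : b ≤ x - y) (hy : 0 ≤ y) (hxy : 2 * y ≤ x) :
    a * b + 2 * y ^ 2 ≤ x ^ 2 - y ^ 2 := by
  have hab : a * b ≤ (x - y) * (x - y) :=
    (mul_le_mul_of_nonneg_left hbx ha).trans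
      (mul_le_mul_of_nonneg_right hax (by linarith))
  nlinarith

lemma two_mul_pow_le_pow {β δ : ℝ} (hβ : 0 ≤ β) (hβδ : 2 * β ≤ δ) {n : ℕ} (hn : n ≠ 0) :
    2 * β ^ n ≤ δ ^ n :=
  calc 2 * β ^ n ≤ 2 ^ n * β ^ n :=
        mul_le_mul_of_nonneg_right (le_self_pow₀ one_le_two hn) (pow_nonneg hβ n)
    _ = (2 * β) ^ n := (mul_pow 2 β n).symm
    _ ≤ δ ^ n := pow_le_pow_left₀ (by positivity) hβδ n

lemma dyadic_le_pow_sub_pow {f : ℕ → ℕ → ℝ} {m : ℕ} {β ε : ℝ} (hf : ∀ j i, 0 ≤ f j i)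
    (hβ : 0 ≤ β) (hε : 0 ≤ ε) (hleaf : ∀ i < 2 ^ m, f 0 i ≤ ε)
    (hstep : ∀ j < m, ∀ i < 2 ^ (m - (j + 1)),
      f (j + 1) i ≤ f j (2 * i) * f j (2 * i + 1) + 2 * β ^ 2 ^ (j + 1)) :
    ∀ j ≤ m, ∀ i < 2 ^ (m - j), f j i ≤ (ε + 2 * β) ^ 2 ^ j - β ^ 2 ^ j := by
  intro j
  induction j with
  | zero =>
    intro _ i hi
    simpa using (hleaf i hi).trans (by linarith)
  | succ j ih =>
    intro hj i hi
    have hchildren : 2 * i + 1 < 2 ^ (m - j) := by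
      rw [show m - j = m - (j + 1) + 1 by omega, pow_succ]
      omega
    have hsq : ∀ x : ℝ, x ^ 2 ^ (j + 1) = (x ^ 2 ^ j) ^ 2 := fun x => by
      rw [pow_succ, pow_mul]
    rw [hsq, hsq]
    refine (hstep j hj i hi).trans ?_
    rw [hsq]
    exact mul_add_two_mul_sq_le_sq_sub_sq (hf j (2 * i)) (ih (by omega) (2 * i) (by omega))
      (ih (by omega) (2 * i + 1) hchildren) (by positivity)
      (two_mul_pow_le_pow hβ (by linarith) (by positivity))

theorem statement16_general {Ω : Type*} [MeasurableSpace Ω] (P : Measure Ω)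
    (m : ℕ) (E : ℕ → Set Ω)
    (c T ε : ℝ)
    (hrec : ∀ j, 1 ≤ j → j ≤ m → ∀ i, i < 2 ^ (m - j) →
      (P (⋂ l ∈ Finset.Ico (i * 2 ^ j) ((i + 1) * 2 ^ j), E l)).toReal ≤
        (P (⋂ l ∈ Finset.Ico (i * 2 ^ j) (i * 2 ^ j + 2 ^ (j - 1)), E l)).toReal *
          (P (⋂ l ∈ Finset.Ico (i * 2 ^ j + 2 ^ (j - 1)) ((i + 1) * 2 ^ j), E l)).toReal +
          2 * Real.exp (-c * T * (2 : ℝ) ^ j))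
    (hone : ∀ i, i < 2 ^ m → (P (E i)).toReal ≤ ε) :
    (P (⋂ l ∈ Finset.Ico 0 (2 ^ m), E l)).toReal ≤
      (ε + 2 * Real.exp (-c * T)) ^ (2 ^ m) := by
  set f : ℕ → ℕ → ℝ := fun j i =>
    (P (⋂ l ∈ Finset.Ico (i * 2 ^ j) ((i + 1) * 2 ^ j), E l)).toReal
  have hleaf : ∀ i < 2 ^ m, f 0 i ≤ ε := fun i hi => by
    simpa only [f, pow_zero, mul_one, Nat.Ico_succ_singleton, Finset.mem_singleton,
      Set.iInter_iInter_eq_left] using hone i hi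
  have hstep : ∀ j < m, ∀ i < 2 ^ (m - (j + 1)),
      f (j + 1) i ≤ f j (2 * i) * f j (2 * i + 1) + 2 * Real.exp (-c * T) ^ 2 ^ (j + 1) := by
    intro j hj i hi
    have h := hrec (j + 1) (by omega) hj i hi
    rw [Nat.add_sub_cancel] at h
    rw [← Real.exp_nat_mul]
    convert h using 4 <;> push_cast <;> ring_nf
  have hbound := dyadic_le_pow_sub_pow (f := f) (fun _ _ => ENNReal.toReal_nonneg)
    (Real.exp_pos _).le (ENNReal.toReal_nonneg.trans (hleaf 0 (by positivity))) hleaf hstep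
    m le_rfl 0 (by simp)
  have hβpow : 0 ≤ Real.exp (-c * T) ^ 2 ^ m := by positivity
  simp only [f, zero_mul, zero_add, one_mul] at hbound
  linarith

/-- dyadic decoupling induction: if every aligned dyadic block of events
satisfies `P(block) ≤ P(left half)·P(right half) + 2e^{−cT·2^j}` and each single event
has probability at most `ε` with `ε + 2e^{−cT} < 1`, then
`P(∩_{i<2^m} E_i) ≤ (ε + 2e^{−cT})^{2^m}`. -/
theorem statement16 {Ω : Type*} [MeasurableSpace Ω] (P : Measure Ω)
    [IsProbabilityMeasure P] (m : ℕ) (E : ℕ → Set Ω)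
    (c T ε : ℝ) (hc : 0 < c) (hT : 0 < T) (hε : 0 < ε)
    (hsmall : ε + 2 * Real.exp (-c * T) < 1)
    (hrec : ∀ j, 1 ≤ j → j ≤ m → ∀ i, i < 2 ^ (m - j) →
      (P (⋂ l ∈ Finset.Ico (i * 2 ^ j) ((i + 1) * 2 ^ j), E l)).toReal ≤
        (P (⋂ l ∈ Finset.Ico (i * 2 ^ j) (i * 2 ^ j + 2 ^ (j - 1)), E l)).toReal *
          (P (⋂ l ∈ Finset.Ico (i * 2 ^ j + 2 ^ (j - 1)) ((i + 1) * 2 ^ j), E l)).toReal +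
          2 * Real.exp (-c * T * (2 : ℝ) ^ j))
    (hone : ∀ i, i < 2 ^ m → (P (E i)).toReal ≤ ε) :
    (P (⋂ l ∈ Finset.Ico 0 (2 ^ m), E l)).toReal ≤
      (ε + 2 * Real.exp (-c * T)) ^ (2 ^ m) :=
  statement16_general P m E c T ε hrec hone
end
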